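/- arXiv:1112.0514 — 2 statements merged into one kernel-verified Lean document; each statement's English description precedes it below -/
import Mathlib

section
/- Let X₁, X₂, … be i.i.d. copies of a nonnegative random variable X with finite second moment, and fix t ≥ 0 with μ₀(t) = P(X > t) > 0, E(X − t | X > t) > 0 and Var(X − t | X > t) > 0. Then the empirical coefficient of variation of the conditional excedance, cvₙ(t), converges in probability to CV(t) as n → ∞. -/
/-!
Both `CV(t)` and `cvₙ(t)` are the same function `cvOfMoments t` of the three truncated moments
`E[X^k; X > t]`, `k = 0, 1, 2`, evaluated at the population moments, respectively at the sample
sums. That function is invariant under scaling all three arguments, so the sums may be replaced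
by averages, which converge almost surely to the moments by the strong law of large numbers.
It is continuous at the population moments because `P(X > t) > 0` and `E[X - t; X > t] > 0`,
and almost sure convergence implies convergence in probability.
-/

open MeasureTheory ProbabilityTheory Real Filter Topology Finset

/-- `CV(t)` written in terms of `mₖ = μₖ(t)`, `k = 0, 1, 2`. -/
noncomputable def cvOfMoments (t m₀ m₁ m₂ : ℝ) : ℝ :=
  m₀ / (m₁ - t * m₀) * √(m₂ / m₀ - (m₁ / m₀) ^ 2)

lemma cvOfMoments_div (t m₀ m₁ m₂ : ℝ) {c : ℝ} (hc : c ≠ 0) :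
    cvOfMoments t (m₀ / c) (m₁ / c) (m₂ / c) = cvOfMoments t m₀ m₁ m₂ := by
  simp only [cvOfMoments, div_div_div_cancel_right₀ hc, mul_div_assoc', ← sub_div]

lemma Filter.Tendsto.cvOfMoments {α : Type*} {l : Filter α} {f₀ f₁ f₂ : α → ℝ}
    {t m₀ m₁ m₂ : ℝ} (h₀ : Tendsto f₀ l (𝓝 m₀)) (h₁ : Tendsto f₁ l (𝓝 m₁))
    (h₂ : Tendsto f₂ l (𝓝 m₂)) (hm₀ : m₀ ≠ 0) (hm₁ : m₁ - t * m₀ ≠ 0) :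
    Tendsto (fun a => _root_.cvOfMoments t (f₀ a) (f₁ a) (f₂ a)) l
      (𝓝 (_root_.cvOfMoments t m₀ m₁ m₂)) :=
  (h₀.div (h₁.sub (h₀.const_mul t)) hm₁).mul ((h₂.div h₀ hm₀).sub ((h₁.div h₀ hm₀).pow 2)).sqrt

lemma Measurable.cvOfMoments {Ω : Type*} [MeasurableSpace Ω] {f₀ f₁ f₂ : Ω → ℝ} (t : ℝ)
    (h₀ : Measurable f₀) (h₁ : Measurable f₁) (h₂ : Measurable f₂) :
    Measurable fun ω => _root_.cvOfMoments t (f₀ ω) (f₁ ω) (f₂ ω) := by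
  unfold _root_.cvOfMoments
  fun_prop

lemma Finset.sum_ite_sub_const {ι : Type*} (s : Finset ι) (p : ι → Prop) [DecidablePred p]
    (a : ι → ℝ) (c : ℝ) :
    ∑ i ∈ s, (if p i then a i - c else 0) =
      ∑ i ∈ s, (if p i then a i else 0) - c * ∑ i ∈ s, (if p i then 1 else 0) := by
  rw [mul_sum, ← sum_sub_distrib]
  refine sum_congr rfl fun i _ => ?_
  split_ifs <;> ring

section Conditioning

variable {Ω : Type*} [MeasurableSpace Ω] {μ : Measure Ω} {s : Set Ω}

lemma integral_cond_eq_integral_indicator_div (hs : MeasurableSet s) (f : Ω → ℝ) :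
    ∫ ω, f ω ∂μ[|s] = (∫ ω, s.indicator f ω ∂μ) / μ.real s := by
  rw [ProbabilityTheory.cond, integral_smul_measure, ← integral_indicator hs, smul_eq_mul,
    ENNReal.toReal_inv, inv_mul_eq_div, measureReal_def]

lemma integral_sub_const_cond [IsFiniteMeasure μ] (hs : MeasurableSet s) {f : Ω → ℝ}
    (hf : Integrable f μ) (c : ℝ) :
    ∫ ω, (f ω - c) ∂μ[|s] = (∫ ω, s.indicator f ω ∂μ - c * μ.real s) / μ.real s := by
  rw [integral_cond_eq_integral_indicator_div hs, Set.indicator_sub,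
    integral_sub (hf.indicator hs) ((integrable_const c).indicator hs),
    integral_indicator_const c hs, smul_eq_mul, mul_comm]

lemma sqrt_variance_div_integral_cond_sub_const [IsFiniteMeasure μ] (hs : MeasurableSet s)
    (hμs : μ s ≠ 0) {f : Ω → ℝ} (hf : MemLp f 2 μ) (c : ℝ) :
    √(variance (fun ω => f ω - c) μ[|s]) / ∫ ω, (f ω - c) ∂μ[|s] =
      cvOfMoments c (μ.real s) (∫ ω, s.indicator f ω ∂μ) (∫ ω, s.indicator (f ^ 2) ω ∂μ) := by
  have := cond_isProbabilityMeasure (μ := μ) hμs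
  have hfs : MemLp f 2 μ[|s] := (hf.restrict s).smul_measure (ENNReal.inv_ne_top.mpr hμs)
  rw [variance_sub_const hfs.aestronglyMeasurable, variance_eq_sub hfs,
    integral_sub_const_cond hs (hf.integrable one_le_two),
    integral_cond_eq_integral_indicator_div hs, integral_cond_eq_integral_indicator_div hs,
    cvOfMoments]
  have hμs' : μ.real s ≠ 0 := ENNReal.toReal_ne_zero.mpr ⟨hμs, measure_ne_top μ s⟩
  field_simp

end Conditioning

lemma strong_law_ae_ite_lt {Ω : Type*} [MeasurableSpace Ω] {μ : Measure Ω} {X : ℕ → Ω → ℝ}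
    (hX₀ : Measurable (X 0)) (hindep : iIndepFun X μ)
    (hident : ∀ i, IdentDistrib (X i) (X 0) μ μ) (t : ℝ) (g : ℝ → ℝ) (hg : Measurable g)
    (hint : Integrable (g ∘ X 0) μ) :
    ∀ᵐ ω ∂μ, Tendsto (fun n : ℕ => (∑ j ∈ range n, if t < X j ω then g (X j ω) else 0) / n)
      atTop (𝓝 (∫ ω, {ω | t < X 0 ω}.indicator (g ∘ X 0) ω ∂μ)) := by
  have hg' : Measurable ((Set.Ioi t).indicator g) := hg.indicator measurableSet_Ioi
  have hcomp : ∀ i, (Set.Ioi t).indicator g ∘ X i = (X i ⁻¹' Set.Ioi t).indicator (g ∘ X i) :=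
    fun i => funext fun ω => Set.indicator_comp_right (X i) (g := g) |>.symm
  have := strong_law_ae_real (fun i => (Set.Ioi t).indicator g ∘ X i)
    (by rw [hcomp]; exact hint.indicator (hX₀ measurableSet_Ioi))
    (fun i j hij => (hindep.indepFun hij).comp hg' hg') (fun i => (hident i).comp hg')
  rw [hcomp 0] at this
  filter_upwards [this] with ω hω
  exact hω.congr fun n => by simp [Set.indicator_apply]

theorem stmt_1_general {Ω : Type*} [MeasureSpace Ω] [IsProbabilityMeasure (ℙ : Measure Ω)]
    (X : ℕ → Ω → ℝ) (hXmeas : ∀ i, Measurable (X i))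
    (hindep : iIndepFun X ℙ)
    (hident : ∀ i, IdentDistrib (X i) (X 0) ℙ ℙ)
    (hX2 : MemLp (X 0) 2 ℙ)
    (t : ℝ)
    (hpos : 0 < ℙ {ω | t < X 0 ω})
    (hmean : 0 < ∫ ω, (X 0 ω - t) ∂(ℙ[|{ω | t < X 0 ω}])) :
    TendstoInMeasure ℙ
      (fun n ω =>
        ((∑ j ∈ Finset.range n, if t < X j ω then (1 : ℝ) else 0) /
            ∑ j ∈ Finset.range n, (if t < X j ω then X j ω - t else 0)) *
          Real.sqrt
            ((∑ j ∈ Finset.range n, (if t < X j ω then (X j ω) ^ 2 else 0)) /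
                (∑ j ∈ Finset.range n, if t < X j ω then (1 : ℝ) else 0) -
              ((∑ j ∈ Finset.range n, (if t < X j ω then X j ω else 0)) /
                  (∑ j ∈ Finset.range n, if t < X j ω then (1 : ℝ) else 0)) ^ 2))
      atTop
      (fun _ =>
        Real.sqrt (variance (fun ω => X 0 ω - t) (ℙ[|{ω | t < X 0 ω}])) /
          ∫ ω, (X 0 ω - t) ∂(ℙ[|{ω | t < X 0 ω}])) := by
  set s := {ω | t < X 0 ω}
  have hs : MeasurableSet s := measurableSet_lt measurable_const (hXmeas 0)
  have hp : 0 < (ℙ : Measure Ω).real s := ENNReal.toReal_pos hpos.ne' (measure_ne_top _ _)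
  have hX1 : Integrable (X 0) ℙ := hX2.integrable one_le_two
  have hden : 0 < (∫ ω, s.indicator (X 0) ω) - t * (ℙ : Measure Ω).real s := by
    rw [integral_sub_const_cond hs hX1] at hmean
    exact (div_pos_iff_of_pos_right hp).mp hmean
  rw [sqrt_variance_div_integral_cond_sub_const hs hpos.ne' hX2]
  simp only [Finset.sum_ite_sub_const]
  have hsum (g : ℝ → ℝ) (hg : Measurable g) (n : ℕ) :
      Measurable fun ω => ∑ j ∈ range n, if t < X j ω then g (X j ω) else 0 :=
    Finset.measurable_sum _ fun j _ =>
      (hg.comp (hXmeas j)).ite (measurableSet_lt measurable_const (hXmeas j)) measurable_const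
  refine tendstoInMeasure_of_tendsto_ae (fun n => (Measurable.cvOfMoments t
    (hsum (fun _ => 1) measurable_const n) (hsum id measurable_id n)
    (hsum (· ^ 2) (measurable_id.pow_const 2) n)).aestronglyMeasurable) ?_
  have avg := strong_law_ae_ite_lt (hXmeas 0) hindep hident t
  filter_upwards [avg (fun _ => 1) measurable_const (integrable_const 1), avg id measurable_id hX1,
    avg (· ^ 2) (measurable_id.pow_const 2) hX2.integrable_sq] with ω h₀ h₁ h₂
  rw [Function.comp_def, integral_indicator_const (1 : ℝ) hs, smul_eq_mul, mul_one] at h₀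
  refine (h₀.cvOfMoments h₁ h₂ hp.ne' hden.ne').congr' ?_
  filter_upwards [eventually_ne_atTop 0] with n hn
  exact cvOfMoments_div _ _ _ _ (Nat.cast_ne_zero.mpr hn)

/-- For i.i.d. copies of a nonnegative random variable `X` with finite second
moment and a threshold `t ≥ 0` with `P(X > t) > 0`, `E(X − t ∣ X > t) > 0` and
`Var(X − t ∣ X > t) > 0`, the empirical coefficient of variation of the conditional excedance,
`cvₙ(t)`, converges in probability to `CV(t)` as `n → ∞`. -/
theorem stmt_1 {Ω : Type*} [MeasureSpace Ω] [IsProbabilityMeasure (ℙ : Measure Ω)]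
    (X : ℕ → Ω → ℝ) (hXmeas : ∀ i, Measurable (X i))
    (hindep : iIndepFun X ℙ)
    (hident : ∀ i, IdentDistrib (X i) (X 0) ℙ ℙ)
    (hXnonneg : ∀ i ω, 0 ≤ X i ω)
    (hX2 : MemLp (X 0) 2 ℙ)
    (t : ℝ) (ht : 0 ≤ t)
    (hpos : 0 < ℙ {ω | t < X 0 ω})
    (hmean : 0 < ∫ ω, (X 0 ω - t) ∂(ℙ[|{ω | t < X 0 ω}]))
    (hvar : 0 < variance (fun ω => X 0 ω - t) (ℙ[|{ω | t < X 0 ω}])) :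
    TendstoInMeasure ℙ
      (fun n ω =>
        ((∑ j ∈ Finset.range n, if t < X j ω then (1 : ℝ) else 0) /
            ∑ j ∈ Finset.range n, (if t < X j ω then X j ω - t else 0)) *
          Real.sqrt
            ((∑ j ∈ Finset.range n, (if t < X j ω then (X j ω) ^ 2 else 0)) /
                (∑ j ∈ Finset.range n, if t < X j ω then (1 : ℝ) else 0) -
              ((∑ j ∈ Finset.range n, (if t < X j ω then X j ω else 0)) /
                  (∑ j ∈ Finset.range n, if t < X j ω then (1 : ℝ) else 0)) ^ 2))
      atTop
      (fun _ =>
        Real.sqrt (variance (fun ω => X 0 ω - t) (ℙ[|{ω | t < X 0 ω}])) /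
          ∫ ω, (X 0 ω - t) ∂(ℙ[|{ω | t < X 0 ω}])) :=
  stmt_1_general X hXmeas hindep hident hX2 t hpos hmean
end

section
/- Let μ > 0 and 0 ≤ s ≤ t. For u ≥ 0 define the truncated exponential moments μ_k(u) = μ^k e^{−u/μ} p_k(u/μ), where p₀(v)=1, p₁(v)=1+v, p₂(v)=2+v(2+v), p₃(v)=6+v(6+v(3+v)), p₄(v)=24+v(24+v(12+v(4+v))). Define the vector a(u) = ( e^{u/μ}(u² + 4uμ + 2μ²)/(2μ²), −e^{u/μ}(u + 2μ)/μ², e^{u/μ}/(2μ²) ) and the 3×3 matrix M(s,t) with entries M(s,t)_{ij} = μ_{i+j}(t) − μ_i(s)μ_j(t) for i,j ∈ {0,1,2}. Then a(s)ᵀ M(s,t) a(t) = exp(s/μ). -/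
/-!
Write `p_k(w) = e^w ∫_w^∞ x^k e^{-x} dx`. At `w = t/μ` the rescaled gradient
`α(w) = ((w² + 4w + 2)/2, -(w + 2), 1/2)` is the coefficient vector of the quadratic
`((x - w - 2)² - 2)/2`, which is orthogonal to `1` and `x` for the weight `e^{-x}` on `(w, ∞)`.
Hence `M(s,t) a(t)` does not see the rank-one part `μ_i(s) μ_j(t)` and equals `(0, 0, 2μ²)`,
so the bilinear form reduces to `2μ² a₂(s) = e^{s/μ}`.
-/

open Real Matrix

/-- The polynomials `p_k` appearing in the truncated moments of the exponential distribution
with mean `1`: `μ_k¹(v) = e^{−v} p_k(v)` for `k = 0, …, 4`. -/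
noncomputable def pExp : ℕ → ℝ → ℝ
  | 0, _ => 1
  | 1, v => 1 + v
  | 2, v => 2 + v * (2 + v)
  | 3, v => 6 + v * (6 + v * (3 + v))
  | 4, v => 24 + v * (24 + v * (12 + v * (4 + v)))
  | _ + 5, _ => 0

noncomputable def expTruncMoment (μ : ℝ) (k : ℕ) (u : ℝ) : ℝ :=
  μ ^ k * Real.exp (-u / μ) * pExp k (u / μ)

noncomputable def cvGradient (μ u : ℝ) : Fin 3 → ℝ :=
  ![Real.exp (u / μ) * (u ^ 2 + 4 * u * μ + 2 * μ ^ 2) / (2 * μ ^ 2),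
    -(Real.exp (u / μ) * (u + 2 * μ)) / μ ^ 2,
    Real.exp (u / μ) / (2 * μ ^ 2)]

noncomputable def cvGradientStd (w : ℝ) : Fin 3 → ℝ :=
  ![(w ^ 2 + 4 * w + 2) / 2, -(w + 2), 1 / 2]

lemma sum_cvGradientStd_mul_pExp (w : ℝ) (i : Fin 3) :
    ∑ j : Fin 3, cvGradientStd w j * pExp (i + j) w = if i = 2 then 2 else 0 := by
  fin_cases i <;> simp [Fin.sum_univ_three, cvGradientStd, pExp] <;> ring

lemma cvGradient_eq {μ : ℝ} (hμ : μ ≠ 0) (u : ℝ) (j : Fin 3) :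
    cvGradient μ u j = Real.exp (u / μ) * (μ ^ (j : ℕ))⁻¹ * cvGradientStd (u / μ) j := by
  fin_cases j <;>
    simp only [cvGradient, cvGradientStd, Fin.isValue, Fin.mk_one, Fin.reduceFinMk, cons_val,
      pow_zero, pow_one] <;>
    field_simp

lemma sum_expTruncMoment_mul_cvGradient {μ : ℝ} (hμ : μ ≠ 0) (t : ℝ) (i : Fin 3) :
    ∑ j : Fin 3, expTruncMoment μ (i + j) t * cvGradient μ t j
      = if i = 2 then 2 * μ ^ 2 else 0 := by
  have hterm : ∀ j : Fin 3, expTruncMoment μ (i + j) t * cvGradient μ t j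
      = μ ^ (i : ℕ) * (cvGradientStd (t / μ) j * pExp (i + j) (t / μ)) := by
    intro j
    rw [expTruncMoment, cvGradient_eq hμ, pow_add, neg_div, Real.exp_neg]
    field_simp
  simp only [hterm, ← Finset.mul_sum, sum_cvGradientStd_mul_pExp]
  fin_cases i <;> simp [mul_comm]

theorem stmt_8_general (μ s t : ℝ) (hμ : 0 < μ)
    (m : ℕ → ℝ → ℝ)
    (hm : ∀ k u, m k u = μ ^ k * Real.exp (-u / μ) * pExp k (u / μ))
    (a : ℝ → Fin 3 → ℝ)
    (ha : ∀ u, a u =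
      ![Real.exp (u / μ) * (u ^ 2 + 4 * u * μ + 2 * μ ^ 2) / (2 * μ ^ 2),
        -(Real.exp (u / μ) * (u + 2 * μ)) / μ ^ 2,
        Real.exp (u / μ) / (2 * μ ^ 2)])
    (M : Matrix (Fin 3) (Fin 3) ℝ)
    (hM : ∀ i j : Fin 3, M i j = m (i.1 + j.1) t - m i.1 s * m j.1 t) :
    dotProduct (a s) (M.mulVec (a t)) = Real.exp (s / μ) := by
  obtain rfl : m = expTruncMoment μ := funext fun k => funext (hm k)
  obtain rfl : a = cvGradient μ := funext ha
  have hmoment := sum_expTruncMoment_mul_cvGradient hμ.ne' t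
  have hmean : ∑ j : Fin 3, expTruncMoment μ j t * cvGradient μ t j = 0 := by
    simpa using hmoment 0
  have hMa : M.mulVec (cvGradient μ t) = ![0, 0, 2 * μ ^ 2] := by
    ext i
    simp only [mulVec, dotProduct, hM, sub_mul, Finset.sum_sub_distrib, mul_assoc,
      ← Finset.mul_sum, hmean, mul_zero, sub_zero, hmoment]
    fin_cases i <;> rfl
  rw [hMa, dotProduct, Fin.sum_univ_three]
  simp only [cvGradient, cons_val, mul_zero, zero_add]
  field_simp

/-- For `μ > 0` and `0 ≤ s ≤ t`, with the truncated exponential moments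
`μ_k(u) = μ^k e^{−u/μ} p_k(u/μ)`, the gradient vector `a(u)` and the covariance matrix
`M(s,t)_{ij} = μ_{i+j}(t) − μ_i(s) μ_j(t)` (for `i,j ∈ {0,1,2}`), one has
`a(s)ᵀ M(s,t) a(t) = exp(s/μ)`. -/
theorem stmt_8 (μ s t : ℝ) (hμ : 0 < μ) (hs : 0 ≤ s) (hst : s ≤ t)
    (m : ℕ → ℝ → ℝ)
    (hm : ∀ k u, m k u = μ ^ k * Real.exp (-u / μ) * pExp k (u / μ))
    (a : ℝ → Fin 3 → ℝ)
    (ha : ∀ u, a u =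
      ![Real.exp (u / μ) * (u ^ 2 + 4 * u * μ + 2 * μ ^ 2) / (2 * μ ^ 2),
        -(Real.exp (u / μ) * (u + 2 * μ)) / μ ^ 2,
        Real.exp (u / μ) / (2 * μ ^ 2)])
    (M : Matrix (Fin 3) (Fin 3) ℝ)
    (hM : ∀ i j : Fin 3, M i j = m (i.1 + j.1) t - m i.1 s * m j.1 t) :
    dotProduct (a s) (M.mulVec (a t)) = Real.exp (s / μ) :=
  stmt_8_general μ s t hμ m hm a ha M hM
end
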